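/- Let f be a sigmoidal efficiency function with γ* the unique positive solution of f(γ) = γ f′(γ), let c > 0, let γ̃ > 0 be a target SIR, and let P_max > 0 satisfy γ̃/c ≤ P_max (the delay requirement is achievable). Define the delay-constrained utility ũ(p) = f(cp)/p if cp ≥ γ̃ and ũ(p) = 0 if cp < γ̃, for p ∈ (0, P_max]. Then ũ attains its maximum over (0, P_max] at the unique point p̃* = min{ max{γ̃, γ*}/c , P_max }, and this maximizer is unique. -/

import Mathlib

/-!
Put `h x = f x / x`, so that `h' x = φ x / x²` with `φ x = x f' x - f x`. On `(0, a]` the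
derivative `f'` is increasing, so the mean value theorem on `[0, x]` gives `f x < x f' x`, i.e.
`φ > 0`; on `[a, ∞)` we have `φ' x = x f'' x < 0`. Hence `φ` changes sign exactly once, at its
zero `γ* = g`, and `h` increases on `(0, γ*]` and decreases on `[γ*, ∞)`. The utility of a
feasible power `p` is `c h (c p)`, and `c p` ranges over `[γ̃, c P_max]`, where the unimodal `h`
is maximized exactly at the point of that interval closest to `γ*`.
-/

open Set

section Unimodal

variable {h : ℝ → ℝ} {g lo hi x : ℝ}

theorem lt_of_between_of_unimodal (hmono : StrictMonoOn h (Ioc 0 g))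
    (hanti : StrictAntiOn h (Ici g)) {y : ℝ} (hx : 0 < x) (hxy : x ≠ y)
    (hbetween : x ≤ y ∧ y ≤ g ∨ g ≤ y ∧ y ≤ x) : h x < h y := by
  rcases hbetween with ⟨hxy', hyg⟩ | ⟨hgy, hyx⟩
  · exact hmono ⟨hx, hxy'.trans hyg⟩ ⟨hx.trans_le hxy', hyg⟩ (hxy'.lt_of_ne hxy)
  · exact hanti hgy (hgy.trans hyx) (hyx.lt_of_ne hxy.symm)

theorem lt_min_max_of_unimodal (hmono : StrictMonoOn h (Ioc 0 g))
    (hanti : StrictAntiOn h (Ici g)) (hx : 0 < x) (hlo : lo ≤ x) (hhi : x ≤ hi)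
    (hne : x ≠ min (max lo g) hi) : h x < h (min (max lo g) hi) := by
  refine lt_of_between_of_unimodal hmono hanti hx hne ?_
  rcases le_total hi (max lo g) with hhi' | hhi'
  · rw [min_eq_right hhi']
    rcases le_total hi g with hig | hgi
    · exact Or.inl ⟨hhi, hig⟩
    · rcases le_max_iff.mp hhi' with hilo | hig
      · exact Or.inr ⟨hgi, hilo.trans hlo⟩
      · exact Or.inl ⟨hhi, hig⟩
  · rw [min_eq_left hhi']
    rcases le_total lo g with hlog | hglo
    · rw [max_eq_right hlog]
      rcases le_total x g with hxg | hgx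
      · exact Or.inl ⟨hxg, le_rfl⟩
      · exact Or.inr ⟨le_rfl, hgx⟩
    · rw [max_eq_left hglo]
      exact Or.inr ⟨hglo, hlo⟩

end Unimodal

section Calculus

variable {f f' f'' : ℝ → ℝ} {D : Set ℝ}

theorem Convex.strictMonoOn_of_hasDerivAt_pos (hD : Convex ℝ D)
    (hf : ∀ x ∈ D, HasDerivAt f (f' x) x) (hf' : ∀ x ∈ interior D, 0 < f' x) :
    StrictMonoOn f D :=
  strictMonoOn_of_hasDerivWithinAt_pos hD (fun x hx ↦ (hf x hx).continuousAt.continuousWithinAt)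
    (fun x hx ↦ (hf x (interior_subset hx)).hasDerivWithinAt) hf'

theorem Convex.strictAntiOn_of_hasDerivAt_neg (hD : Convex ℝ D)
    (hf : ∀ x ∈ D, HasDerivAt f (f' x) x) (hf' : ∀ x ∈ interior D, f' x < 0) :
    StrictAntiOn f D :=
  strictAntiOn_of_hasDerivWithinAt_neg hD (fun x hx ↦ (hf x hx).continuousAt.continuousWithinAt)
    (fun x hx ↦ (hf x (interior_subset hx)).hasDerivWithinAt) hf'

theorem sub_lt_mul_of_strictMonoOn_deriv {x : ℝ} (hx : 0 < x) (hf : ContinuousOn f (Icc 0 x))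
    (hf' : ∀ y ∈ Ioo 0 x, HasDerivAt f (f' y) y) (hmono : StrictMonoOn f' (Ioc 0 x)) :
    f x - f 0 < x * f' x := by
  obtain ⟨ξ, hξ, hslope⟩ := exists_hasDerivAt_eq_slope f f' hx hf hf'
  have hξx : f' ξ < f' x := hmono ⟨hξ.1, hξ.2.le⟩ ⟨hx, le_rfl⟩ hξ.2
  rw [sub_zero, eq_div_iff hx.ne'] at hslope
  nlinarith

theorem hasDerivAt_mul_deriv_sub {x : ℝ} (hf : HasDerivAt f (f' x) x)
    (hf' : HasDerivAt f' (f'' x) x) :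
    HasDerivAt (fun y ↦ y * f' y - f y) (x * f'' x) x :=
  (((hasDerivAt_id' x).mul hf').sub hf).congr_deriv (by ring)

theorem hasDerivAt_div_self {x : ℝ} (hf : HasDerivAt f (f' x) x) (hx : x ≠ 0) :
    HasDerivAt (fun y ↦ f y / y) ((x * f' x - f x) / x ^ 2) x :=
  (hf.div (hasDerivAt_id' x) hx).congr_deriv (by ring)

end Calculus

section Sigmoidal

variable {f f' f'' : ℝ → ℝ} {a g : ℝ}

theorem pos_of_hasDerivAt_pos (hcont : ContinuousOn f (Ici 0))
    (hf : ∀ x, 0 < x → HasDerivAt f (f' x) x) (hf' : ∀ x, 0 < x → 0 < f' x) (hf0 : f 0 = 0)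
    {x : ℝ} (hx : 0 < x) : 0 < f x := by
  have hmono : StrictMonoOn f (Ici 0) :=
    strictMonoOn_of_hasDerivWithinAt_pos (convex_Ici 0) hcont
      (fun y hy ↦ by rw [interior_Ici] at hy ⊢; exact (hf y hy).hasDerivWithinAt)
      (fun y hy ↦ hf' y (by rwa [interior_Ici] at hy))
  simpa [hf0] using hmono self_mem_Ici hx.le hx

theorem lt_mul_deriv_of_le_inflection (hcont : ContinuousOn f (Ici 0))
    (hf : ∀ x, 0 < x → HasDerivAt f (f' x) x) (hf' : ∀ x, 0 < x → HasDerivAt f' (f'' x) x)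
    (hf0 : f 0 = 0) (hconvex : ∀ x, 0 < x → x < a → 0 < f'' x) {x : ℝ} (hx : x ∈ Ioc 0 a) :
    f x < x * f' x := by
  have hmono : StrictMonoOn f' (Ioc 0 a) :=
    (convex_Ioc 0 a).strictMonoOn_of_hasDerivAt_pos (fun y hy ↦ hf' y hy.1)
      (fun y hy ↦ by rw [interior_Ioc] at hy; exact hconvex y hy.1 hy.2)
  simpa [hf0] using sub_lt_mul_of_strictMonoOn_deriv hx.1
    (hcont.mono fun y hy ↦ hy.1) (fun y hy ↦ hf y hy.1)
    (hmono.mono (Ioc_subset_Ioc_right hx.2))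

theorem strictAntiOn_mul_deriv_sub (hf : ∀ x, 0 < x → HasDerivAt f (f' x) x)
    (hf' : ∀ x, 0 < x → HasDerivAt f' (f'' x) x) (ha : 0 < a)
    (hconcave : ∀ x, a < x → f'' x < 0) :
    StrictAntiOn (fun x ↦ x * f' x - f x) (Ici a) :=
  (convex_Ici a).strictAntiOn_of_hasDerivAt_neg
    (fun x hx ↦ hasDerivAt_mul_deriv_sub (hf x (ha.trans_le hx)) (hf' x (ha.trans_le hx)))
    (fun x hx ↦ by
      rw [interior_Ici] at hx
      exact mul_neg_of_pos_of_neg (ha.trans hx) (hconcave x hx))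

theorem mul_deriv_sub_sign (hcont : ContinuousOn f (Ici 0))
    (hf : ∀ x, 0 < x → HasDerivAt f (f' x) x) (hf' : ∀ x, 0 < x → HasDerivAt f' (f'' x) x)
    (hf0 : f 0 = 0) (ha : 0 < a) (hconvex : ∀ x, 0 < x → x < a → 0 < f'' x)
    (hconcave : ∀ x, a < x → f'' x < 0) (hg : 0 < g) (hfg : f g = g * f' g) :
    (∀ x, 0 < x → x < g → 0 < x * f' x - f x) ∧ (∀ x, g < x → x * f' x - f x < 0) := by
  have hpos : ∀ x ∈ Ioc 0 a, 0 < x * f' x - f x := fun x hx ↦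
    sub_pos.2 (lt_mul_deriv_of_le_inflection hcont hf hf' hf0 hconvex hx)
  have hanti := strictAntiOn_mul_deriv_sub hf hf' ha hconcave
  have hφg : g * f' g - f g = 0 := by rw [hfg, sub_self]
  have hag : a < g := by
    by_contra! hga
    exact (hpos g ⟨hg, hga⟩).ne' hφg
  refine ⟨fun x hx hxg ↦ ?_, fun x hgx ↦ ?_⟩
  · rcases le_or_gt x a with hxa | hax
    · exact hpos x ⟨hx, hxa⟩
    · simpa [hφg] using hanti hax.le hag.le hxg
  · simpa [hφg] using hanti hag.le (hag.trans hgx).le hgx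

theorem strictMonoOn_div_self (hf : ∀ x, 0 < x → HasDerivAt f (f' x) x)
    (hpos : ∀ x, 0 < x → x < g → 0 < x * f' x - f x) :
    StrictMonoOn (fun x ↦ f x / x) (Ioc 0 g) :=
  (convex_Ioc 0 g).strictMonoOn_of_hasDerivAt_pos
    (fun x hx ↦ hasDerivAt_div_self (hf x hx.1) hx.1.ne')
    (fun x hx ↦ by
      rw [interior_Ioc] at hx
      exact div_pos (hpos x hx.1 hx.2) (pow_pos hx.1 2))

theorem strictAntiOn_div_self (hf : ∀ x, 0 < x → HasDerivAt f (f' x) x) (hg : 0 < g)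
    (hneg : ∀ x, g < x → x * f' x - f x < 0) :
    StrictAntiOn (fun x ↦ f x / x) (Ici g) :=
  (convex_Ici g).strictAntiOn_of_hasDerivAt_neg
    (fun x hx ↦ hasDerivAt_div_self (hf x (hg.trans_le hx)) (hg.trans_le hx).ne')
    (fun x hx ↦ by
      rw [interior_Ici] at hx
      exact div_neg_of_neg_of_pos (hneg x hx) (pow_pos (hg.trans hx) 2))

end Sigmoidal

theorem delay_constrained_utility_maximizer_general (f f' f'' : ℝ → ℝ)
    (hcontf : ContinuousOn f (Set.Ici 0))
    (hderiv : ∀ x : ℝ, 0 < x → HasDerivAt f (f' x) x)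
    (hderiv2 : ∀ x : ℝ, 0 < x → HasDerivAt f' (f'' x) x)
    (hf0 : f 0 = 0)
    (hf'pos : ∀ x : ℝ, 0 < x → 0 < f' x)
    (a : ℝ) (ha : 0 < a)
    (hconvex : ∀ x : ℝ, 0 < x → x < a → 0 < f'' x)
    (hconcave : ∀ x : ℝ, a < x → f'' x < 0)
    (g : ℝ) (hg : 0 < g) (hgeq : f g = g * f' g)
    (c : ℝ) (hc : 0 < c)
    (γt : ℝ)
    (Pmax : ℝ) (hPmax : 0 < Pmax) (hfeas : γt / c ≤ Pmax) :
    (∀ p ∈ Set.Ioc (0 : ℝ) Pmax,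
        (if γt ≤ c * p then f (c * p) / p else 0) ≤
        (if γt ≤ c * min (max γt g / c) Pmax
          then f (c * min (max γt g / c) Pmax) / min (max γt g / c) Pmax else 0)) ∧
    (∀ p ∈ Set.Ioc (0 : ℝ) Pmax, p ≠ min (max γt g / c) Pmax →
        (if γt ≤ c * p then f (c * p) / p else 0) <
        (if γt ≤ c * min (max γt g / c) Pmax
          then f (c * min (max γt g / c) Pmax) / min (max γt g / c) Pmax else 0)) := by
  obtain ⟨hpos, hneg⟩ := mul_deriv_sub_sign hcontf hderiv hderiv2 hf0 ha hconvex hconcave hg hgeq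
  set p' := min (max γt g / c) Pmax
  have hp' : 0 < p' := lt_min (div_pos (hg.trans_le (le_max_right _ _)) hc) hPmax
  have hcPmax : γt ≤ c * Pmax := by rwa [div_le_iff₀ hc, mul_comm] at hfeas
  have hcp' : c * p' = min (max γt g) (c * Pmax) := by
    rw [mul_min_of_nonneg _ _ hc.le, mul_div_cancel₀ _ hc.ne']
  have hfeas' : γt ≤ c * p' := hcp' ▸ le_min (le_max_left _ _) hcPmax
  have hutility : ∀ p, 0 < p → f (c * p) / p = c * (f (c * p) / (c * p)) := fun p hp ↦ by
    field_simp
  have hstrict : ∀ p ∈ Ioc 0 Pmax, p ≠ p' →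
      (if γt ≤ c * p then f (c * p) / p else 0) < f (c * p') / p' := by
    intro p ⟨hp, hpP⟩ hne
    split_ifs with hγp
    · rw [hutility p hp, hutility p' hp', hcp']
      refine mul_lt_mul_of_pos_left ?_ hc
      refine lt_min_max_of_unimodal (strictMonoOn_div_self hderiv hpos)
        (strictAntiOn_div_self hderiv hg hneg) (mul_pos hc hp) hγp
        (mul_le_mul_of_nonneg_left hpP hc.le) ?_
      rw [← hcp']
      exact fun h ↦ hne (mul_left_cancel₀ hc.ne' h)
    · exact div_pos (pos_of_hasDerivAt_pos hcontf hderiv hf'pos hf0 (mul_pos hc hp')) hp'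
  rw [if_pos hfeas']
  refine ⟨fun p hp ↦ ?_, hstrict⟩
  rcases eq_or_ne p p' with rfl | hne
  · rw [if_pos hfeas']
  · exact (hstrict p hp hne).le

/-- For a sigmoidal efficiency function `f` with `γ*` the unique positive
solution of `f γ = γ f' γ`, a target SIR `γ̃ > 0` achievable within the power limit
(`γ̃/c ≤ P_max`), the delay-constrained utility `ũ(p) = f(c p)/p` if `c p ≥ γ̃`,
`ũ(p) = 0` otherwise, attains its maximum over `(0, P_max]` at the unique point
`p̃* = min (max γ̃ γ* / c) P_max`. -/
theorem delay_constrained_utility_maximizer (f f' f'' : ℝ → ℝ)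
    (hcontf : ContinuousOn f (Set.Ici 0))
    (hderiv : ∀ x : ℝ, 0 < x → HasDerivAt f (f' x) x)
    (hcontf' : ContinuousOn f' (Set.Ioi 0))
    (hderiv2 : ∀ x : ℝ, 0 < x → HasDerivAt f' (f'' x) x)
    (hf0 : f 0 = 0)
    (hf'pos : ∀ x : ℝ, 0 < x → 0 < f' x)
    (hrange : ∀ x : ℝ, 0 ≤ x → 0 ≤ f x ∧ f x < 1)
    (hlim : Filter.Tendsto f Filter.atTop (nhds 1))
    (a : ℝ) (ha : 0 < a)
    (hconvex : ∀ x : ℝ, 0 < x → x < a → 0 < f'' x)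
    (hconcave : ∀ x : ℝ, a < x → f'' x < 0)
    (g : ℝ) (hg : 0 < g) (hgeq : f g = g * f' g)
    (hguniq : ∀ g' : ℝ, 0 < g' → f g' = g' * f' g' → g' = g)
    (c : ℝ) (hc : 0 < c)
    (γt : ℝ) (hγt : 0 < γt)
    (Pmax : ℝ) (hPmax : 0 < Pmax) (hfeas : γt / c ≤ Pmax) :
    (∀ p ∈ Set.Ioc (0 : ℝ) Pmax,
        (if γt ≤ c * p then f (c * p) / p else 0) ≤
        (if γt ≤ c * min (max γt g / c) Pmax
          then f (c * min (max γt g / c) Pmax) / min (max γt g / c) Pmax else 0)) ∧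
    (∀ p ∈ Set.Ioc (0 : ℝ) Pmax, p ≠ min (max γt g / c) Pmax →
        (if γt ≤ c * p then f (c * p) / p else 0) <
        (if γt ≤ c * min (max γt g / c) Pmax
          then f (c * min (max γt g / c) Pmax) / min (max γt g / c) Pmax else 0)) :=
  delay_constrained_utility_maximizer_general f f' f'' hcontf hderiv hderiv2 hf0 hf'pos a ha hconvex
    hconcave g hg hgeq c hc γt Pmax hPmax hfeas
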